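/- Let K be a subring of ℚ, let I be a set, and let H be a group generated by the images of group homomorphisms x_i : (K, +) → H (i ∈ I). Assume that for each positive integer s that is invertible in K there is a group endomorphism π_s of H with π_s(x_i(a)) = x_i(a/s) for all i ∈ I and a ∈ K. Fix n ≥ 1 and λ ∈ K. Given m ∈ ℕ, indices i₁^k, …, i_n^k ∈ I and scalars a₁^k, …, a_n^k ∈ K for k = 1, …, m, if the product ∏_{k=1}^m [x_{i₁^k}(a₁^k), x_{i₂^k}(a₂^k), …, x_{i_n^k}(a_n^k)]] lies in γ_{n+1}(H), then the product ∏_{k=1}^m [x_{i₁^k}(λ·a₁^k), x_{i₂^k}(a₂^k), …, x_{i_n^k}(a_n^k)]] also lies in γ_{n+1}(H). -/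

import Mathlib

/-- The commutator `[g, h] = g⁻¹h⁻¹gh`. -/
def pComm {G : Type*} [Group G] (g h : G) : G := g⁻¹ * h⁻¹ * g * h

/-- The right-nested iterated commutator `[g₁, g₂, …, gₙ]] = [g₁, [g₂, [⋯, gₙ]]]`. -/
def pNest {G : Type*} [Group G] : List G → G
  | [] => 1
  | [g] => g
  | g :: (h :: t) => pComm g (pNest (h :: t))

section helpers
variable {G : Type*} [Group G] {G' : Type*} [Group G']
open scoped commutatorElement

lemma pComm_map (f : G →* G') (a b : G) : f (pComm a b) = pComm (f a) (f b) := by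
  simp [pComm]

lemma pNest_map (f : G →* G') : ∀ L : List G, f (pNest L) = pNest (L.map f)
  | [] => by simp [pNest]
  | [g] => by simp [pNest]
  | g :: h :: t => by
      have := pNest_map f (h :: t)
      simp only [pNest, List.map_cons] at *
      rw [pComm_map, this]

lemma pComm_eq (a b : G) : pComm a b = ⁅a⁻¹, b⁻¹⁆ := by
  simp [pComm, commutatorElement_def]

lemma pComm_mem_comm {A B : Subgroup G} (a b : G) (ha : a ∈ A) (hb : b ∈ B) :
    pComm a b ∈ ⁅B, A⁆ := by
  rw [pComm_eq, Subgroup.commutator_comm]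
  exact Subgroup.commutator_mem_commutator (A.inv_mem ha) (B.inv_mem hb)

lemma pComm_mem_lcs {r : ℕ} (a b : G) (hb : b ∈ (⊤ : Subgroup G).lowerCentralSeries r) :
    pComm a b ∈ (⊤ : Subgroup G).lowerCentralSeries (r + 1) := by
  rw [lowerCentralSeries_succ]
  exact pComm_mem_comm a b (Subgroup.mem_top a) hb

lemma pNest_mem_lcs : ∀ L : List G, L ≠ [] → pNest L ∈ (⊤ : Subgroup G).lowerCentralSeries (L.length - 1)
  | [], h => absurd rfl h
  | [g], _ => by simp [pNest]
  | g :: h :: t, _ => by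
      have ih := pNest_mem_lcs (h :: t) (by simp)
      have := pComm_mem_lcs g _ ih
      simpa [pNest] using this

/-- if `pComm a c` and `pComm b c` are central, bilinearity on the left. -/
lemma pComm_mul_left {a b c : G} (h1 : ∀ z, Commute (pComm a c) z) :
    pComm (a * b) c = pComm a c * pComm b c := by
  have e1 : pComm (a * b) c = b⁻¹ * pComm a c * (c⁻¹ * b * c) := by
    unfold pComm; group
  rw [e1, ← (h1 b⁻¹).eq]
  unfold pComm; group

lemma pComm_mul_right {a c d : G} (h1 : ∀ z, Commute (pComm a c) z) :
    pComm a (c * d) = pComm a c * pComm a d := by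
  have e1 : pComm a (c * d) = (pComm a d) * (d⁻¹ * pComm a c * d) := by
    unfold pComm; group
  rw [e1, ← (h1 d⁻¹).eq, inv_mul_cancel_right, (h1 (pComm a d)).eq]

end helpers

section quot
variable {H : Type*} [Group H]

lemma mk_central {r s : ℕ} (h : r ≤ s + 1) {u : H} (hu : u ∈ (⊤ : Subgroup H).lowerCentralSeries s) :
    ∀ z : H ⧸ (⊤ : Subgroup H).lowerCentralSeries r,
      Commute ((QuotientGroup.mk' ((⊤ : Subgroup H).lowerCentralSeries r)) u) z := by
  intro z
  induction z using QuotientGroup.induction_on with | H g =>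
  show _ * _ = _ * _
  rw [QuotientGroup.mk'_apply, ← QuotientGroup.mk_mul, ← QuotientGroup.mk_mul,
    QuotientGroup.eq]
  have e : (u * g)⁻¹ * (g * u) = pComm g u := by unfold pComm; group
  rw [e]
  exact lowerCentralSeries_antitone _ h (pComm_mem_lcs g u hu)

lemma pNest_cons (p : H) (L : List H) (hL : L ≠ []) :
    pNest (p :: L) = pComm p (pNest L) := by
  cases L with
  | nil => exact absurd rfl hL
  | cons h t => rfl

lemma nest_add (g g' : H) :
    ∀ (pre : List H) (r : ℕ) (suf : List H),
    r ≤ pre.length + 1 + suf.length →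
    (QuotientGroup.mk' ((⊤ : Subgroup H).lowerCentralSeries r)) (pNest (pre ++ (g * g') :: suf)) =
      (QuotientGroup.mk' ((⊤ : Subgroup H).lowerCentralSeries r)) (pNest (pre ++ g :: suf)) *
      (QuotientGroup.mk' ((⊤ : Subgroup H).lowerCentralSeries r)) (pNest (pre ++ g' :: suf)) := by
  intro pre
  induction pre with
  | nil =>
    intro r suf h
    cases suf with
    | nil => simp [pNest, map_mul]
    | cons s ss =>
      simp only [List.nil_append, List.length_nil, List.length_cons] at h ⊢
      set c := pNest (s :: ss) with hc
      have hcmem : c ∈ (⊤ : Subgroup H).lowerCentralSeries ss.length := by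
        simpa using pNest_mem_lcs (s :: ss) (by simp)
      have hcent : ∀ (b : H) (w : H ⧸ (⊤ : Subgroup H).lowerCentralSeries r),
          Commute (pComm ((QuotientGroup.mk' ((⊤ : Subgroup H).lowerCentralSeries r)) b)
            ((QuotientGroup.mk' ((⊤ : Subgroup H).lowerCentralSeries r)) c)) w := by
        intro b w
        rw [← pComm_map]
        exact mk_central (by omega) (pComm_mem_lcs b c hcmem) w
      have e : ∀ b : H, pNest (b :: s :: ss) = pComm b c := fun b => rfl
      rw [e, e, e, pComm_map, pComm_map, pComm_map, map_mul,
        pComm_mul_left (hcent g)]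
  | cons p pre' ih =>
    intro r suf h
    cases r with
    | zero =>
      have : Subsingleton (H ⧸ (⊤ : Subgroup H).lowerCentralSeries 0) := by
        rw [lowerCentralSeries_zero]
        exact QuotientGroup.subsingleton_quotient_top
      exact Subsingleton.elim _ _
    | succ r' =>
      simp only [List.length_cons] at h
      have hlen : r' ≤ pre'.length + 1 + suf.length := by omega
      have ih3 := ih r' suf hlen
      set T := pNest (pre' ++ (g * g') :: suf) with hT
      set T1 := pNest (pre' ++ g :: suf) with hT1
      set T2 := pNest (pre' ++ g' :: suf) with hT2
      have ih3' : (QuotientGroup.mk' ((⊤ : Subgroup H).lowerCentralSeries r')) (T1 * T2) =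
          (QuotientGroup.mk' ((⊤ : Subgroup H).lowerCentralSeries r')) T := by
        rw [map_mul]; exact ih3.symm
      obtain ⟨z, hzmem, hzeq⟩ := (QuotientGroup.mk'_eq_mk' _).mp ih3'
      -- hzeq : T1 * T2 * z = T
      have hmono : (⊤ : Subgroup H).lowerCentralSeries (pre'.length + suf.length) ≤
          (⊤ : Subgroup H).lowerCentralSeries (r' - 1) := lowerCentralSeries_antitone _ (by omega)
      have hT1mem : T1 ∈ (⊤ : Subgroup H).lowerCentralSeries (r' - 1) := by
        apply hmono
        have := pNest_mem_lcs (pre' ++ g :: suf) (by simp)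
        have hlen1 : (pre' ++ g :: suf).length - 1 = pre'.length + suf.length := by
          simp only [List.length_append, List.length_cons]; omega
        rwa [hlen1] at this
      have hT2mem : T2 ∈ (⊤ : Subgroup H).lowerCentralSeries (r' - 1) := by
        apply hmono
        have := pNest_mem_lcs (pre' ++ g' :: suf) (by simp)
        have hlen2 : (pre' ++ g' :: suf).length - 1 = pre'.length + suf.length := by
          simp only [List.length_append, List.length_cons]; omega
        rwa [hlen2] at this
      have hzmem' : z ∈ (⊤ : Subgroup H).lowerCentralSeries (r' - 1) :=
        lowerCentralSeries_antitone _ (by omega) hzmem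
      set mk := QuotientGroup.mk' ((⊤ : Subgroup H).lowerCentralSeries (r' + 1)) with hmk
      have c1 : ∀ w, Commute (pComm (mk p) (mk T1)) w := by
        intro w; rw [← pComm_map]
        exact mk_central (by omega) (pComm_mem_lcs p T1 hT1mem) w
      have c2 : ∀ w, Commute (pComm (mk p) (mk T2)) w := by
        intro w; rw [← pComm_map]
        exact mk_central (by omega) (pComm_mem_lcs p T2 hT2mem) w
      have cz1 : mk (pComm p z) = 1 := by
        rw [QuotientGroup.mk'_apply, QuotientGroup.eq_one_iff]
        exact pComm_mem_lcs p z hzmem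
      have hne : ∀ b : H, pre' ++ b :: suf ≠ [] := by intro b; simp
      rw [List.cons_append, List.cons_append, List.cons_append]
      rw [pNest_cons p _ (hne (g * g')), pNest_cons p _ (hne g), pNest_cons p _ (hne g')]
      rw [← hT, ← hT1, ← hT2, ← hzeq]
      rw [pComm_map, pComm_map, pComm_map, map_mul, map_mul,
        mul_assoc (mk T1) (mk T2) (mk z),
        pComm_mul_right c1, pComm_mul_right c2, ← pComm_map, ← pComm_map, ← pComm_map,
        cz1, mul_one]

end quot

theorem ofFn_update {α : Type*} {nn : ℕ} (f : Fin nn → α) (j : Fin nn) (v : α) :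
    List.ofFn (Function.update f j v) = (List.ofFn f).take j ++ v :: (List.ofFn f).drop (j+1) := by
  apply List.ext_getElem
  · simp; omega
  · intro i h1 h2
    simp only [List.getElem_ofFn]
    rcases lt_trichotomy i j.1 with hij | hij | hij
    · rw [List.getElem_append_left (by simp [hij, Nat.le_of_lt j.2])]
      rw [List.getElem_take, List.getElem_ofFn]
      rw [Function.update_of_ne (by simp [Fin.ext_iff]; omega)]
    · have hlen : ((List.ofFn f).take j.1).length = j.1 := by simp [Nat.le_of_lt j.2]
      rw [List.getElem_append_right (by omega)]
      simp only [hlen, hij]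
      simp [Function.update, Fin.ext_iff, hij]
    · have hlen : ((List.ofFn f).take j.1).length = j.1 := by simp [Nat.le_of_lt j.2]
      rw [List.getElem_append_right (by omega)]
      simp only [hlen]
      obtain ⟨k, hk⟩ : ∃ k, i - j.1 = k + 1 := ⟨i - j.1 - 1, by omega⟩
      simp only [hk, List.getElem_cons_succ, List.getElem_drop, List.getElem_ofFn]
      rw [Function.update_of_ne (by simp [Fin.ext_iff]; omega)]
      exact congrArg f (Fin.ext (by simp; omega))

lemma nest_add_ofFn {H : Type*} [Group H] {nn r : ℕ} (hr : r ≤ nn)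
    (f : Fin nn → H) (j : Fin nn) (g g' : H) :
    (QuotientGroup.mk' ((⊤ : Subgroup H).lowerCentralSeries r)) (pNest (List.ofFn (Function.update f j (g * g')))) =
      (QuotientGroup.mk' ((⊤ : Subgroup H).lowerCentralSeries r)) (pNest (List.ofFn (Function.update f j g))) *
      (QuotientGroup.mk' ((⊤ : Subgroup H).lowerCentralSeries r)) (pNest (List.ofFn (Function.update f j g'))) := by
  rw [ofFn_update, ofFn_update, ofFn_update]
  apply nest_add
  have := j.2
  simp only [List.length_take, List.length_drop, List.length_ofFn]
  omega

lemma map_lcs_le {H : Type*} [Group H] (f : H →* H) (k : ℕ) :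
    Subgroup.map f ((⊤ : Subgroup H).lowerCentralSeries k) ≤ (⊤ : Subgroup H).lowerCentralSeries k := by
  induction k with
  | zero => exact le_top.trans_eq (lowerCentralSeries_zero _).symm
  | succ k ih =>
    calc Subgroup.map f ((⊤ : Subgroup H).lowerCentralSeries (k+1))
        = Subgroup.map f ⁅(⊤ : Subgroup H).lowerCentralSeries k, (⊤ : Subgroup H)⁆ := rfl
      _ = ⁅Subgroup.map f ((⊤ : Subgroup H).lowerCentralSeries k), Subgroup.map f ⊤⁆ :=
          Subgroup.map_commutator _ _ f
      _ ≤ ⁅(⊤ : Subgroup H).lowerCentralSeries k, (⊤ : Subgroup H)⁆ :=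
          Subgroup.commutator_mono ih le_top

lemma map_lcs {H : Type*} [Group H] (f : H →* H) (k : ℕ) {u : H}
    (hu : u ∈ (⊤ : Subgroup H).lowerCentralSeries k) : f u ∈ (⊤ : Subgroup H).lowerCentralSeries k :=
  map_lcs_le f k ⟨u, hu, rfl⟩

lemma exists_inv_den (K : Subring ℚ) (lam : K) :
    ∃ t : K, (((lam:ℚ).den : ℕ) : K) * t = 1 ∧ lam = (((lam:ℚ).num : ℤ) : K) * t := by
  set r : ℚ := (lam : ℚ) with hrdef
  have hden : (r.den : ℚ) ≠ 0 := Nat.cast_ne_zero.mpr r.den_nz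
  have hmem : (r.den : ℚ)⁻¹ ∈ K := by
    have hcop : Int.gcd r.num r.den = 1 := r.reduced
    have hbez := Int.gcd_eq_gcd_ab r.num (r.den : ℤ)
    set u := Int.gcdA r.num r.den with hu
    set v := Int.gcdB r.num r.den with hv
    have h1 : r.num * u + (r.den : ℤ) * v = 1 := by
      rw [← hbez, hcop]; norm_num
    have hrd : r * r.den = r.num := ((div_eq_iff hden).mp (Rat.num_div_den r)).symm
    have key : ((u:ℚ) * r + v) * r.den = 1 := by
      have h2 : ((r.num : ℚ) * u + (r.den : ℚ) * v) = 1 := by exact_mod_cast congrArg (fun z : ℤ => (z:ℚ)) h1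
      calc ((u:ℚ) * r + v) * r.den = (u:ℚ) * (r * r.den) + (r.den : ℚ) * v := by ring
      _ = (r.num : ℚ) * u + (r.den : ℚ) * v := by rw [hrd]; ring
      _ = 1 := h2
    have hinv : (r.den : ℚ)⁻¹ = (u:ℚ) * r + v := (eq_inv_of_mul_eq_one_left key).symm
    rw [hinv]
    exact add_mem (mul_mem (intCast_mem K u) lam.2) (intCast_mem K v)
  refine ⟨⟨(r.den : ℚ)⁻¹, hmem⟩, ?_, ?_⟩
  · apply Subtype.ext
    push_cast
    exact mul_inv_cancel₀ hden
  · apply Subtype.ext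
    push_cast
    rw [← div_eq_mul_inv, Rat.num_div_den]

/-- Let `K` be a subring of `ℚ`, `H` a group generated by the images of
group homomorphisms `xᵢ : (K, +) → H`, and assume that for every positive integer `s`
invertible in `K` there is an endomorphism of `H` sending each `xᵢ(a)` to `xᵢ(a/s)`.
If a product of right-nested commutators of weight `n` lies in `γ_{n+1}(H)`, then
the product obtained by multiplying the first entry of each commutator by `λ ∈ K`
also lies in `γ_{n+1}(H)`. -/
theorem scalar_multiplication_well_defined
    (K : Subring ℚ) {H : Type*} [Group H] {I : Type*}
    (x : I → Multiplicative K →* H)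
    (hgen : Subgroup.closure (⋃ i, Set.range (x i)) = ⊤)
    (hπ : ∀ (s : ℕ), 0 < s → ∀ t : K, (s : K) * t = 1 →
      ∃ π : H →* H, ∀ (i : I) (a : K),
        π (x i (Multiplicative.ofAdd a)) = x i (Multiplicative.ofAdd (a * t)))
    (n : ℕ) (hn : 1 ≤ n) (lam : K)
    (m : ℕ) (idx : Fin m → Fin n → I) (a : Fin m → Fin n → K)
    (hprod : (List.ofFn fun k : Fin m =>
        pNest (List.ofFn fun l : Fin n =>
          x (idx k l) (Multiplicative.ofAdd (a k l)))).prod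
      ∈ (⊤ : Subgroup H).lowerCentralSeries n) :
    (List.ofFn fun k : Fin m =>
        pNest (List.ofFn fun l : Fin n =>
          x (idx k l) (Multiplicative.ofAdd
            (if l.val = 0 then lam * a k l else a k l)))).prod
      ∈ (⊤ : Subgroup H).lowerCentralSeries n := by
    classical
  obtain ⟨t, hqt, hlam⟩ := exists_inv_den K lam
  obtain ⟨π, hπ'⟩ := hπ (lam:ℚ).den (lam:ℚ).pos t hqt
  set N := (⊤ : Subgroup H).lowerCentralSeries n with hNdef
  let mk : H →* H ⧸ N := QuotientGroup.mk' N
  let w : Fin m → (Fin n → K) → H := fun k b =>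
    pNest (List.ofFn fun l => x (idx k l) (Multiplicative.ofAdd (b l)))
  have hw_mem : ∀ (k : Fin m) (b : Fin n → K), mk (w k b) ∈ Subgroup.center (H ⧸ N) := by
    intro k b
    rw [Subgroup.mem_center_iff]
    intro g
    have hmem : w k b ∈ (⊤ : Subgroup H).lowerCentralSeries (n - 1) := by
      have h1 := pNest_mem_lcs (List.ofFn fun l => x (idx k l) (Multiplicative.ofAdd (b l)))
        (by simp [List.ofFn_eq_nil_iff]; omega)
      simpa using h1
    exact (mk_central (by omega) hmem g).eq.symm
  let Cc : Fin m → (Fin n → K) → ↥(Subgroup.center (H ⧸ N)) := fun k b => ⟨mk (w k b), hw_mem k b⟩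
  let P : (Fin m → Fin n → K) → ↥(Subgroup.center (H ⧸ N)) := fun b =>
    (List.ofFn fun k => Cc k (b k)).prod
  have hP_coe : ∀ b, ((P b : H ⧸ N)) = mk ((List.ofFn fun k => w k (b k)).prod) := by
    intro b
    have h1 : ((P b : H ⧸ N)) =
        ((Subgroup.center (H ⧸ N)).subtype ((List.ofFn fun k => Cc k (b k)).prod)) := rfl
    rw [h1, map_list_prod, List.map_ofFn, map_list_prod, List.map_ofFn]
    rfl
  have hadd : ∀ (k : Fin m) (b : Fin n → K) (j : Fin n) (β β' : K),
      Cc k (Function.update b j (β + β')) =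
        Cc k (Function.update b j β) * Cc k (Function.update b j β') := by
    intro k b j β β'
    apply Subtype.ext
    have hfun : ∀ γ : K, (fun l => x (idx k l) (Multiplicative.ofAdd (Function.update b j γ l)))
        = Function.update (fun l => x (idx k l) (Multiplicative.ofAdd (b l))) j
            (x (idx k j) (Multiplicative.ofAdd γ)) := by
      intro γ
      funext l
      by_cases hl : l = j
      · subst hl; simp
      · rw [Function.update_of_ne hl, Function.update_of_ne hl]
    show mk (pNest (List.ofFn fun l =>
        x (idx k l) (Multiplicative.ofAdd (Function.update b j (β + β') l)))) =
      mk (pNest (List.ofFn fun l =>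
        x (idx k l) (Multiplicative.ofAdd (Function.update b j β l)))) *
      mk (pNest (List.ofFn fun l =>
        x (idx k l) (Multiplicative.ofAdd (Function.update b j β' l))))
    rw [hfun, hfun, hfun]
    have hmul : x (idx k j) (Multiplicative.ofAdd (β + β')) =
        x (idx k j) (Multiplicative.ofAdd β) * x (idx k j) (Multiplicative.ofAdd β') := by
      rw [ofAdd_add, map_mul]
    rw [hmul]
    exact nest_add_ofFn le_rfl _ j _ _
  have hzsmul : ∀ (k : Fin m) (b : Fin n → K) (j : Fin n) (β : K) (zz : ℤ),
      Cc k (Function.update b j ((zz : K) * β)) = Cc k (Function.update b j β) ^ zz := by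
    intro k b j β zz
    let F : Multiplicative K →* ↥(Subgroup.center (H ⧸ N)) :=
      MonoidHom.mk' (fun γ => Cc k (Function.update b j γ.toAdd)) (by
        intro γ1 γ2
        simpa using hadd k b j γ1.toAdd γ2.toAdd)
    have h1 : Cc k (Function.update b j ((zz : K) * β)) = F (Multiplicative.ofAdd (zz • β)) := by
      show Cc k _ = Cc k (Function.update b j (Multiplicative.ofAdd (zz • β)).toAdd)
      congr 2
    rw [h1, ofAdd_zsmul, map_zpow]
    rfl
  have hyp1 : P (fun k l => a k l * t) = 1 := by
    apply Subtype.ext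
    rw [hP_coe]
    have hmemN : (List.ofFn fun k => w k (fun l => a k l * t)).prod ∈ N := by
      have h2 : π ((List.ofFn fun k : Fin m => pNest (List.ofFn fun l : Fin n =>
          x (idx k l) (Multiplicative.ofAdd (a k l)))).prod) ∈ N := map_lcs π n hprod
      rw [map_list_prod, List.map_ofFn] at h2
      have h3 : (π ∘ fun k : Fin m => pNest (List.ofFn fun l : Fin n =>
          x (idx k l) (Multiplicative.ofAdd (a k l)))) = fun k => w k (fun l => a k l * t) := by
        funext k
        show π (pNest (List.ofFn fun l : Fin n =>
          x (idx k l) (Multiplicative.ofAdd (a k l)))) = _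
        rw [pNest_map, List.map_ofFn]
        show pNest (List.ofFn fun l => π (x (idx k l) (Multiplicative.ofAdd (a k l)))) = _
        exact congrArg pNest (congrArg List.ofFn (funext fun l => hπ' (idx k l) (a k l)))
      rwa [h3] at h2
    exact (QuotientGroup.eq_one_iff _).mpr hmemN
  -- the de-scaling induction
  have hstep : ∀ j : ℕ, 1 ≤ j → j ≤ n →
      P (fun k l => if l.1 = 0 ∨ j ≤ l.1 then a k l * t else a k l) = 1 := by
    intro j
    induction j with
    | zero => omega
    | succ j ihj =>
      intro _ hj
      by_cases hj0 : j = 0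
      · subst hj0
        have he : (fun (k : Fin m) (l : Fin n) =>
            if l.1 = 0 ∨ 0 + 1 ≤ l.1 then a k l * t else a k l) = fun k l => a k l * t := by
          funext k l
          rw [if_pos (by omega)]
        rw [he]
        exact hyp1
      · have hjn : j < n := by omega
        have prev := ihj (by omega) (by omega)
        set jf : Fin n := ⟨j, hjn⟩ with hjf
        have hupd : (fun (k : Fin m) (l : Fin n) =>
            if l.1 = 0 ∨ j + 1 ≤ l.1 then a k l * t else a k l)
            = fun k => Function.update
                (fun l => if l.1 = 0 ∨ j ≤ l.1 then a k l * t else a k l) jf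
                (((((lam:ℚ).den : ℤ)) : K) * (a k jf * t)) := by
          funext k l
          by_cases hl : l = jf
          · subst hl
            rw [Function.update_self]
            rw [if_neg (by simp [hjf]; omega)]
            have he2 : (((((lam:ℚ).den : ℤ)) : K)) * (a k jf * t)
                = a k jf * (((lam:ℚ).den : K) * t) := by push_cast; ring
            rw [he2, hqt, mul_one]
          · rw [Function.update_of_ne hl]
            have hlj : l.1 ≠ j := fun hcontra => hl (Fin.ext (by simpa [hjf] using hcontra))
            exact if_congr (by omega) rfl rfl
        rw [hupd]
        have hpow : ∀ k : Fin m, Cc k (Function.update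
              (fun l => if l.1 = 0 ∨ j ≤ l.1 then a k l * t else a k l) jf
              (((((lam:ℚ).den : ℤ)) : K) * (a k jf * t)))
            = Cc k (fun l => if l.1 = 0 ∨ j ≤ l.1 then a k l * t else a k l)
              ^ (((lam:ℚ).den : ℤ)) := by
          intro k
          rw [hzsmul]
          congr 1
          have hbj : a k jf * t
              = (fun l => if l.1 = 0 ∨ j ≤ l.1 then a k l * t else a k l) jf := by
            simp only [hjf]
            rw [if_pos (by omega)]
          rw [hbj, Function.update_eq_self]
        show (List.ofFn fun k => Cc k (Function.update
            (fun l => if l.1 = 0 ∨ j ≤ l.1 then a k l * t else a k l) jf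
            (((((lam:ℚ).den : ℤ)) : K) * (a k jf * t)))).prod = 1
        rw [congrArg List.ofFn (funext hpow)]
        open IsMulCommutative in rw [List.prod_ofFn, Finset.prod_zpow, ← List.prod_ofFn]
        show (P _) ^ (((lam:ℚ).den : ℤ)) = 1
        rw [prev, one_zpow]
  have hfin := hstep n hn le_rfl
  -- final scaling of slot 0 by num
  have hn0 : (0 : ℕ) < n := hn
  set zf : Fin n := ⟨0, hn0⟩ with hzf
  have hgv : (fun (k : Fin m) (l : Fin n) => if l.1 = 0 then lam * a k l else a k l)
      = fun k => Function.update
          (fun l => if l.1 = 0 ∨ n ≤ l.1 then a k l * t else a k l) zf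
          ((((lam:ℚ).num : ℤ) : K) * (a k zf * t)) := by
    funext k l
    by_cases hl : l = zf
    · subst hl
      rw [Function.update_self, if_pos (by simp [hzf])]
      have : ((((lam:ℚ).num : ℤ) : K)) * (a k zf * t) = ((((lam:ℚ).num : ℤ) : K) * t) * a k zf := by
        ring
      rw [this, ← hlam]
    · have hlj : l.1 ≠ 0 := fun hcontra => hl (Fin.ext (by simpa [hzf] using hcontra))
      have hln : l.1 < n := l.2
      rw [Function.update_of_ne hl, if_neg hlj, if_neg (by omega)]
  have hPgv : P (fun k l => if l.1 = 0 then lam * a k l else a k l) = 1 := by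
    rw [hgv]
    have hpow : ∀ k : Fin m, Cc k (Function.update
          (fun l => if l.1 = 0 ∨ n ≤ l.1 then a k l * t else a k l) zf
          ((((lam:ℚ).num : ℤ) : K) * (a k zf * t)))
        = Cc k (fun l => if l.1 = 0 ∨ n ≤ l.1 then a k l * t else a k l)
          ^ ((lam:ℚ).num) := by
      intro k
      rw [hzsmul]
      congr 1
      have hbj : a k zf * t
          = (fun l => if l.1 = 0 ∨ n ≤ l.1 then a k l * t else a k l) zf := by
        show a k zf * t = if (0:ℕ) = 0 ∨ n ≤ 0 then a k zf * t else a k zf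
        rw [if_pos (Or.inl rfl)]
      rw [hbj, Function.update_eq_self]
    show (List.ofFn fun k => Cc k (Function.update
        (fun l => if l.1 = 0 ∨ n ≤ l.1 then a k l * t else a k l) zf
        ((((lam:ℚ).num : ℤ) : K) * (a k zf * t)))).prod = 1
    rw [congrArg List.ofFn (funext hpow)]
    open IsMulCommutative in rw [List.prod_ofFn, Finset.prod_zpow, ← List.prod_ofFn]
    show (P _) ^ ((lam:ℚ).num) = 1
    rw [hfin, one_zpow]
  have hcoe := congrArg (Subtype.val) hPgv
  rw [hP_coe] at hcoe
  exact (QuotientGroup.eq_one_iff _).mp hcoe
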